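/- arXiv:2307.01428 — 14 statements merged into one kernel-verified Lean document; each statement's English description precedes it below -/
import Mathlib

section
/- Let y be a string over an alphabet Σ. For any characters a, b ∈ Σ and any string x ∈ Σ*, if a·x·b is a minimal absent word of y, then x ∈ Substr(y) and x = Rrep_y(x), i.e., x is the longest string w with EndPos_y(w) = EndPos_y(x). -/
open List

/-- 1-indexed beginning positions of occurrences of `x` in `y`:
`BegPos y x = { i | 1 ≤ i ≤ |y| - |x| + 1, y[i..i+|x|-1] = x }`. -/
def BegPos {α : Type*} (y x : List α) : Set ℕ :=
  {i | 1 ≤ i ∧ i ≤ y.length - x.length + 1 ∧ x <+: y.drop (i - 1)}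

/-- 1-indexed ending positions of occurrences of `x` in `y`:
`EndPos y x = { i | |x| ≤ i ≤ |y|, y[i-|x|+1..i] = x }`. -/
def EndPos {α : Type*} (y x : List α) : Set ℕ :=
  {i | x.length ≤ i ∧ i ≤ y.length ∧ x <:+ y.take i}

/-- `IsLrepOf y w x` means `w = Lrep_y(x)`: `w` is left-equivalent to `x` in `y`
(`BegPos y w = BegPos y x`) and is the longest such string. -/
def IsLrepOf {α : Type*} (y w x : List α) : Prop :=
  BegPos y w = BegPos y x ∧ ∀ v : List α, BegPos y v = BegPos y x → v.length ≤ w.length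

/-- `IsRrepOf y w x` means `w = Rrep_y(x)`: `w` is right-equivalent to `x` in `y`
(`EndPos y w = EndPos y x`) and is the longest such string. -/
def IsRrepOf {α : Type*} (y w x : List α) : Prop :=
  EndPos y w = EndPos y x ∧ ∀ v : List α, EndPos y v = EndPos y x → v.length ≤ w.length

/-- `x` is a minimal absent word of `y`: `x` is not a substring of `y` and
every proper substring of `x` is a substring of `y`. -/
def IsMAW {α : Type*} (y x : List α) : Prop :=
  ¬ x <:+: y ∧ ∀ w : List α, w <:+: x → w ≠ x → w <:+: y

/-! If `v` were strictly longer than `x` with the same end positions, then `v` would end with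
`a :: x` (an occurrence of `a :: x` ends where an occurrence of `x`, hence of `v`, ends), so
every occurrence of `x` would be preceded by `a`. The occurrence of `x` inside an occurrence
of `x ++ [b]` would then extend to an occurrence of `a :: x ++ [b]`, which is absent. -/

namespace EndPos

variable {α : Type*} {y u w : List α} {i : ℕ}

theorem length_append_mem (s w t : List α) : (s ++ w).length ∈ EndPos (s ++ w ++ t) w :=
  ⟨by simp, by simp, by rw [take_left]; exact suffix_append s w⟩

theorem exists_mem_of_infix (h : w <:+: y) : ∃ i, i ∈ EndPos y w := by
  obtain ⟨s, t, rfl⟩ := h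
  exact ⟨_, length_append_mem s w t⟩

theorem mem_of_suffix (hw : i ∈ EndPos y w) (hu : u <:+ w) : i ∈ EndPos y u :=
  ⟨hu.length_le.trans hw.1, hw.2.1, hu.trans hw.2.2⟩

theorem suffix_of_mem_of_length_le (hu : i ∈ EndPos y u) (hw : i ∈ EndPos y w)
    (hlen : u.length ≤ w.length) : u <:+ w :=
  suffix_of_suffix_length_le hu.2.2 hw.2.2 hlen

theorem subset_of_eq_of_suffix {v x : List α} (hv : EndPos y v = EndPos y x)
    (hw : w <:+: y) (hxw : x <:+ w) (hlen : w.length ≤ v.length) :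
    EndPos y x ⊆ EndPos y w := by
  obtain ⟨i, hi⟩ := exists_mem_of_infix hw
  have hwv : w <:+ v :=
    suffix_of_mem_of_length_le hi (hv ▸ mem_of_suffix hi hxw) hlen
  intro j hj
  exact mem_of_suffix (hv ▸ hj) hwv

theorem infix_of_subset_append {x p q : List α} (hp : EndPos y x ⊆ EndPos y (p ++ x))
    (hq : x ++ q <:+: y) : p ++ x ++ q <:+: y := by
  obtain ⟨s, t, rfl⟩ := hq
  have hy : s ++ (x ++ q) ++ t = s ++ x ++ (q ++ t) := by simp only [append_assoc]
  have hpx : p ++ x <:+ s ++ x := by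
    have hj := (hp (hy ▸ length_append_mem s x (q ++ t))).2.2
    rwa [hy, take_left] at hj
  obtain ⟨r, hr⟩ := hpx
  obtain rfl : r ++ p = s := by simpa only [← append_assoc, append_cancel_right_eq] using hr
  exact ⟨r, t, by simp only [append_assoc]⟩

end EndPos

theorem IsMAW.infix_of_length_lt {α : Type*} {y z w : List α} (h : IsMAW y z) (hw : w <:+: z)
    (hlen : w.length < z.length) : w <:+: y :=
  h.2 w hw (by rintro rfl; exact hlen.false)

theorem maw_inner_is_rrep {α : Type*} (y : List α) (a b : α) (x : List α)
    (h : IsMAW y (a :: (x ++ [b]))) :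
    x <:+: y ∧ IsRrepOf y x x := by
  have hx : x <:+: y := h.infix_of_length_lt ⟨[a], [b], by simp⟩ (by simp)
  have hax : a :: x <:+: y := h.infix_of_length_lt ⟨[], [b], by simp⟩ (by simp)
  have hxb : x ++ [b] <:+: y := h.infix_of_length_lt ⟨[a], [], by simp⟩ (by simp)
  refine ⟨hx, rfl, fun v hv => ?_⟩
  by_contra! hlen
  have hsub : EndPos y x ⊆ EndPos y ([a] ++ x) :=
    EndPos.subset_of_eq_of_suffix hv hax (suffix_cons a x) hlen
  exact h.1 (by simpa using EndPos.infix_of_subset_append hsub hxb)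
end

section
/- Let y be a string over an alphabet Σ, let x ∈ Substr(y) satisfy x = Rrep_y(x), and let a ∈ Σ be a character with a·x ∈ Substr(y). Then EndPos_y(a·x) is a proper subset of EndPos_y(x), and a·x is the shortest string in its right-equivalence class: every string w ∈ Σ* with EndPos_y(w) = EndPos_y(a·x) has a·x as a suffix. (Consequently, in the DAWG of y, the suffix link of the node [a·x] points to the node [x].) -/
open List

theorem suffix_link_of_rrep {α : Type*} (y x : List α) (a : α)
    (hx : x <:+: y) (hr : IsRrepOf y x x) (hax : (a :: x) <:+: y) :
    EndPos y (a :: x) ⊂ EndPos y x ∧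
      ∀ w : List α, EndPos y w = EndPos y (a :: x) → (a :: x) <:+ w := by
  obtain ⟨s, t, hst⟩ := hax
  set i := s.length + (a :: x).length with hi
  have hiy : i ≤ y.length := by
    rw [← hst]; simp [hi]
  have htake : y.take i = s ++ (a :: x) := by
    rw [← hst, List.take_left' (by simp [hi])]
  have hmem : i ∈ EndPos y (a :: x) :=
    ⟨by simp [hi], hiy, htake ▸ List.suffix_append _ _⟩
  have hsub : EndPos y (a :: x) ⊆ EndPos y x := by
    rintro j ⟨h1, h2, h3⟩
    exact ⟨by simp at h1; omega, h2, (List.suffix_cons a x).trans h3⟩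
  have hne : EndPos y (a :: x) ≠ EndPos y x := by
    intro h
    have := hr.2 (a :: x) h
    simp at this
  refine ⟨hsub.ssubset_of_ne hne, ?_⟩
  intro w hw
  have hmw : i ∈ EndPos y w := hw ▸ hmem
  rcases List.suffix_or_suffix_of_suffix hmw.2.2 hmem.2.2 with h | h
  · rcases List.suffix_cons_iff.1 h with rfl | h'
    · exact List.suffix_refl _
    · exfalso
      apply hne
      refine Set.Subset.antisymm hsub ?_
      rw [← hw]
      rintro j ⟨h1, h2, h3⟩
      exact ⟨h'.length_le.trans h1, h2, h'.trans h3⟩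
  · exact h
end

section
/- Let y be a string over an alphabet Σ. For any x ∈ Substr(y), if x = Rrep_y(x) (x is the longest string w with EndPos_y(w) = EndPos_y(x)), then every prefix z of x also satisfies z = Rrep_y(z). -/
open List

theorem rrep_prefix_closed {α : Type*} (y x : List α)
    (hx : x <:+: y) (hr : IsRrepOf y x x) :
    ∀ z : List α, z <+: x → IsRrepOf y z z := by
  intro z hz
  refine ⟨rfl, ?_⟩
  intro v hv
  by_contra hlen
  push_neg at hlen
  obtain ⟨s, t', hy⟩ := hz.isInfix.trans hx
  obtain ⟨t, hxt⟩ := hz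
  -- occurrence of z ending at i₀ := s.length + z.length
  have htake : (s ++ z ++ t').take (s.length + z.length) = s ++ z := by
    exact List.take_left' (by simp)
  have hiz : s.length + z.length ∈ EndPos y z := by
    refine ⟨by omega, ?_, ⟨s, by rw [← hy, htake]⟩⟩
    rw [← hy]; simp
  have hiv : s.length + z.length ∈ EndPos y v := by rw [hv]; exact hiz
  have hzv : z <:+ v :=
    List.suffix_of_suffix_length_le hiz.2.2 hiv.2.2 (le_of_lt hlen)
  obtain ⟨u, huv⟩ := hzv
  have hul : 0 < u.length := by
    have := congrArg List.length huv
    simp at this; omega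
  have hvz : EndPos y (u ++ z) = EndPos y z := huv ▸ hv
  have hEnd : EndPos y (u ++ x) = EndPos y x := by
    ext i
    constructor
    · rintro ⟨h1, h2, hsuf⟩
      refine ⟨by simp at h1 ⊢; omega, h2, (List.suffix_append u x).trans hsuf⟩
    · rintro ⟨h1, h2, w, hw⟩
      -- y.take (i - t.length) = w ++ z
      have hxlen : x.length = z.length + t.length := by
        rw [← hxt]; simp
      have hwl : w.length + x.length = i := by
        have := congrArg List.length hw
        simp at this; omega
      have htk : y.take (i - t.length) = w ++ z := by
        rw [show i - t.length = min (i - t.length) i by omega, ← List.take_take, ← hw,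
          ← hxt, ← List.append_assoc, show i - t.length = (w ++ z).length by simp; omega]
        exact List.take_left' rfl
      have hmem : i - t.length ∈ EndPos y (u ++ z) := by
        rw [hvz]
        refine ⟨by omega, by omega, ?_⟩
        rw [htk]; exact List.suffix_append w z
      have h4 : u.length + z.length ≤ i - t.length := by
        have := hmem.1; simpa using this
      obtain ⟨w', hw'⟩ := hmem.2.2
      rw [htk] at hw'
      refine ⟨by simp; omega, h2, ⟨w', ?_⟩⟩
      rw [← hw, ← hxt, show w' ++ (u ++ (z ++ t)) = (w' ++ (u ++ z)) ++ t by simp, hw']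
      simp
  have h5 := hr.2 (u ++ x) hEnd
  rw [List.length_append] at h5
  omega
end

section
/- Let y be a string over an alphabet Σ whose last character occurs exactly once in y. Let x ∈ Substr(y) satisfy x = Rrep_y(x), and suppose that for every character b ∈ Σ with x·b ∈ Substr(y) it holds that x·b ≠ Rrep_y(x·b). Then x = Lrep_y(x), i.e., x is the longest string w with BegPos_y(w) = BegPos_y(x). (Every leaf of the trie of right-representatives is a node of the suffix tree of y.) -/
open List

private lemma begPos_anti {α : Type*} (y : List α) {u v : List α} (h : u <+: v) :
    BegPos y v ⊆ BegPos y u := by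
  rintro i ⟨h1, h2, h3⟩
  have hl := h.length_le
  exact ⟨h1, by omega, h.trans h3⟩

private lemma endPos_anti {α : Type*} (y : List α) {u v : List α} (h : u <:+ v) :
    EndPos y v ⊆ EndPos y u := by
  rintro i ⟨h1, h2, h3⟩
  have hl := h.length_le
  exact ⟨by omega, h2, h.trans h3⟩

theorem black_leaf_is_suffix_tree_node {α : Type*} [DecidableEq α]
    (y : List α) (hy : y ≠ []) (hlast : y.count (y.getLast hy) = 1)
    (x : List α) (hx : x <:+: y) (hr : IsRrepOf y x x)
    (h : ∀ b : α, (x ++ [b]) <:+: y → ¬ IsRrepOf y (x ++ [b]) (x ++ [b])) :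
    IsLrepOf y x x := by
  refine ⟨rfl, ?_⟩
  intro v hv
  by_contra hlen
  push_neg at hlen
  obtain ⟨s, t, hst⟩ := hx
  have hylen : y.length = s.length + x.length + t.length := by
    rw [← hst]; simp; ring
  have hi : s.length + 1 ∈ BegPos y x := by
    refine ⟨by omega, by omega, ?_⟩
    simp only [Nat.add_sub_cancel]
    rw [← hst, append_assoc, drop_left]
    exact ⟨t, rfl⟩
  have hiv : s.length + 1 ∈ BegPos y v := by rw [hv]; exact hi
  have hxv : x <+: v := by
    rcases prefix_or_prefix_of_prefix hi.2.2 hiv.2.2 with h' | h'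
    · exact h'
    · exact absurd h'.length_le (by omega)
  obtain ⟨r, hvr⟩ := hxv
  rcases r with _ | ⟨b, r'⟩
  · have := congrArg length hvr; simp at this; omega
  have hxb_pref : x ++ [b] <+: v := ⟨r', by rw [← hvr]; simp⟩
  have hB : BegPos y (x ++ [b]) = BegPos y x := by
    apply Set.Subset.antisymm (begPos_anti y (prefix_append x [b]))
    rw [← hv]; exact begPos_anti y hxb_pref
  have key : ∀ j ∈ EndPos y x, j + 1 ≤ y.length ∧ j + 1 ∈ EndPos y (x ++ [b]) := by
    rintro j ⟨hj1, hj2, s', hs'⟩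
    have hls' : s'.length + x.length = j := by
      have := congrArg length hs'; simp at this; omega
    have hdrop : y.drop s'.length = x ++ y.drop j := by
      conv_lhs => rw [← take_append_drop j y, ← hs', append_assoc]
      rw [drop_left]
    have hjB : s'.length + 1 ∈ BegPos y x := by
      refine ⟨by omega, by omega, ?_⟩
      simp only [Nat.add_sub_cancel]
      rw [hdrop]
      exact prefix_append x _
    have hjB' : s'.length + 1 ∈ BegPos y (x ++ [b]) := by rw [hB]; exact hjB
    obtain ⟨-, hb2, t', ht'⟩ := hjB'
    simp only [Nat.add_sub_cancel] at ht'
    have hlen2 : s'.length + (x.length + 1) + t'.length = y.length := by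
      have := congrArg length ht'
      simp [length_drop] at this
      omega
    have hx1 : y.take (j + 1) = y.take s'.length ++ (x ++ [b]) := by
      have h1 : j + 1 = s'.length + (x.length + 1) := by omega
      rw [h1, take_add, ← ht', take_left' (by simp)]
    refine ⟨by omega, by simp; omega, by omega, ⟨y.take s'.length, hx1.symm⟩⟩
  have hj0 : s.length + x.length ∈ EndPos y x := by
    refine ⟨by omega, by omega, ?_⟩
    have hts : y.take (s.length + x.length) = s ++ x := by
      rw [← hst, take_left' (by simp)]
    exact ⟨s, hts.symm⟩
  obtain ⟨hlt, hmem⟩ := key _ hj0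
  have hinf : (x ++ [b]) <:+: y := by
    obtain ⟨-, -, s2, hs2⟩ := hmem
    exact ⟨s2, y.drop (s.length + x.length + 1), by rw [hs2, take_append_drop]⟩
  have hnr := h b hinf
  rw [IsRrepOf] at hnr
  push_neg at hnr
  obtain ⟨w, hw, hwlen⟩ := hnr rfl
  have hmw : s.length + x.length + 1 ∈ EndPos y w := by rw [hw]; exact hmem
  obtain ⟨-, -, sw, hsw⟩ := hmw
  obtain ⟨-, -, sb, hsb⟩ := hmem
  have hxbw : (x ++ [b]) <:+ w := by
    rcases suffix_or_suffix_of_suffix ⟨sw, hsw⟩ ⟨sb, hsb⟩ with h' | h'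
    · exact absurd h'.length_le (by simp at hwlen ⊢; omega)
    · exact h'
  obtain ⟨u, huw⟩ := hxbw
  have hulen : u.length + (x.length + 1) = w.length := by
    have := congrArg length huw; simp at this; omega
  have hfinal : EndPos y (u ++ x) = EndPos y x := by
    apply Set.Subset.antisymm (endPos_anti y (suffix_append u x))
    intro j hj
    obtain ⟨hlt', hmem'⟩ := key j hj
    rw [← hw] at hmem'
    obtain ⟨hw1, hw2, sw', hsw'⟩ := hmem'
    have hsw2 : (sw' ++ (u ++ x)) ++ [b] = y.take (j + 1) := by
      rw [← hsw', ← huw]; simp [append_assoc]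
    have hlsw : sw'.length + (u.length + x.length) = j := by
      have := congrArg length hsw2
      rw [length_take, Nat.min_eq_left hlt'] at this
      simp at this
      omega
    refine ⟨by simp; omega, by omega, ⟨sw', ?_⟩⟩
    have h2 : (y.take (j + 1)).take j = y.take j := by
      rw [take_take, Nat.min_eq_left (by omega)]
    rw [← h2, ← hsw2, take_left' (by simp; omega)]
  have hcon := hr.2 (u ++ x) hfinal
  rw [length_append] at hcon
  simp only [length_append, length_singleton] at hwlen
  omega
end

section
/- Let y be a string over an alphabet Σ whose last character occurs exactly once in y, and let x ∈ Substr(y) satisfy x = Lrep_y(x). Then x = Rrep_y(x) if and only if for every character a ∈ Σ such that a·x ∈ Substr(y) and a·x = Lrep_y(a·x), the cardinalities satisfy |BegPos_y(a·x)| ≠ |BegPos_y(x)|. -/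
open List

lemma begPos_mem_iff {α : Type*} {y z : List α} {i : ℕ} :
    i ∈ BegPos y z ↔ 1 ≤ i ∧ i - 1 + z.length ≤ y.length ∧ z <+: y.drop (i - 1) := by
  constructor
  · rintro ⟨h1, h2, h3⟩
    have := h3.length_le
    rw [length_drop] at this
    exact ⟨h1, by omega, h3⟩
  · rintro ⟨h1, h2, h3⟩
    exact ⟨h1, by omega, h3⟩

lemma begPos_end {α : Type*} {y z : List α} {i : ℕ} (hi : i ∈ BegPos y z) :
    i - 1 + z.length ∈ EndPos y z := by
  rw [begPos_mem_iff] at hi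
  obtain ⟨h1, h2, t, ht⟩ := hi
  refine ⟨by omega, h2, ⟨y.take (i - 1), ?_⟩⟩
  rw [take_add, ← ht, take_left]

lemma endPos_beg {α : Type*} {y z : List α} {j : ℕ} (hj : j ∈ EndPos y z) :
    j - z.length + 1 ∈ BegPos y z := by
  obtain ⟨h1, h2, s, hs⟩ := hj
  have hslen : s.length = j - z.length := by
    have := congrArg length hs
    simp only [length_append, length_take] at this
    omega
  rw [begPos_mem_iff]
  refine ⟨by omega, by omega, ⟨y.drop j, ?_⟩⟩
  have hy : y = s ++ (z ++ y.drop j) := by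
    rw [← append_assoc, hs, take_append_drop]
  have h3 : j - z.length + 1 - 1 = s.length := by omega
  rw [h3]
  conv_rhs => rw [hy]
  rw [drop_left]

lemma endPos_eq_image {α : Type*} (y z : List α) :
    EndPos y z = (fun i => i - 1 + z.length) '' BegPos y z := by
  ext j
  constructor
  · intro hj
    exact ⟨j - z.length + 1, endPos_beg hj, by have := hj.1; show j - z.length + 1 - 1 + z.length = j; omega⟩
  · rintro ⟨i, hi, rfl⟩
    exact begPos_end hi

lemma begPos_finite {α : Type*} (y z : List α) : (BegPos y z).Finite :=
  (Set.finite_Icc 1 (y.length + 1)).subset fun i hi => by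
    rw [begPos_mem_iff] at hi; exact ⟨hi.1, by omega⟩

lemma endPos_finite {α : Type*} (y z : List α) : (EndPos y z).Finite := by
  rw [endPos_eq_image]; exact (begPos_finite y z).image _

lemma endPos_ncard {α : Type*} (y z : List α) :
    (EndPos y z).ncard = (BegPos y z).ncard := by
  rw [endPos_eq_image]
  exact Set.ncard_image_of_injOn fun i hi i' hi' h => by
    have := hi.1; have := hi'.1; omega

lemma endPos_mono {α : Type*} {y z w : List α} (h : z <:+ w) :
    EndPos y w ⊆ EndPos y z := fun j hj =>
  ⟨h.length_le.trans hj.1, hj.2.1, h.trans hj.2.2⟩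

lemma begPos_mono {α : Type*} {y z w : List α} (h : z <+: w) :
    BegPos y w ⊆ BegPos y z := fun i hi => by
  rw [begPos_mem_iff] at hi ⊢
  have := h.length_le
  exact ⟨hi.1, by omega, h.trans hi.2.2⟩

lemma begPos_nonempty {α : Type*} {y z : List α} (h : z <:+: y) :
    (BegPos y z).Nonempty := by
  obtain ⟨s, t, hst⟩ := h
  refine ⟨s.length + 1, ?_⟩
  rw [begPos_mem_iff]
  have hlen := congrArg length hst
  simp only [length_append] at hlen
  refine ⟨by omega, by omega, ⟨t, ?_⟩⟩
  have hy : y = s ++ (z ++ t) := by rw [← append_assoc, hst]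
  simp only [Nat.add_sub_cancel]
  conv_rhs => rw [hy]
  rw [drop_left]

lemma infix_of_endPos {α : Type*} {y z : List α} {j : ℕ} (hj : j ∈ EndPos y z) :
    z <:+: y :=
  hj.2.2.isInfix.trans (take_prefix j y).isInfix

lemma begPos_cons {α : Type*} {y z : List α} {a : α} {j : ℕ}
    (hj : j ∈ BegPos y (a :: z)) : j + 1 ∈ BegPos y z := by
  rw [begPos_mem_iff] at hj ⊢
  obtain ⟨h1, h2, t, ht⟩ := hj
  simp only [length_cons] at h2
  refine ⟨by omega, by omega, ⟨t, ?_⟩⟩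
  have hdd : y.drop (j + 1 - 1) = (y.drop (j - 1)).drop 1 := by
    rw [drop_drop]; congr 1; omega
  rw [hdd, ← ht]
  simp

theorem suffix_tree_node_black_iff {α : Type*} [DecidableEq α]
    (y : List α) (hy : y ≠ []) (hlast : y.count (y.getLast hy) = 1)
    (x : List α) (hx : x <:+: y) (hl : IsLrepOf y x x) :
    IsRrepOf y x x ↔
      ∀ a : α, (a :: x) <:+: y → IsLrepOf y (a :: x) (a :: x) →
        (BegPos y (a :: x)).ncard ≠ (BegPos y x).ncard := by
  obtain ⟨-, hlmax⟩ := hl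
  constructor
  · rintro ⟨-, hrmax⟩ a hax hla hcard
    have hsub : EndPos y (a :: x) ⊆ EndPos y x := endPos_mono ⟨[a], rfl⟩
    have hE : EndPos y (a :: x) = EndPos y x :=
      Set.eq_of_subset_of_ncard_le hsub
        (by rw [endPos_ncard, endPos_ncard, hcard]) (endPos_finite y x)
    have := hrmax _ hE
    simp at this
  · intro h
    refine ⟨rfl, fun v hv => ?_⟩
    by_contra hlen
    push_neg at hlen
    obtain ⟨i₀, hi₀⟩ := begPos_nonempty hx
    have hj₀ : i₀ - 1 + x.length ∈ EndPos y x := begPos_end hi₀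
    have hj₀v : i₀ - 1 + x.length ∈ EndPos y v := by rw [hv]; exact hj₀
    have hxv : x <:+ v := suffix_of_suffix_length_le hj₀.2.2 hj₀v.2.2 (le_of_lt hlen)
    obtain ⟨u, hu⟩ := hxv
    have hu_ne : u ≠ [] := by
      intro h'
      rw [h', nil_append] at hu
      rw [← hu] at hlen
      omega
    obtain ⟨u', a, hu'⟩ := (u.eq_nil_or_concat).resolve_left hu_ne
    have hax_suf : (a :: x) <:+ v := ⟨u', by rw [← hu, hu']; simp⟩
    have hE : EndPos y (a :: x) = EndPos y x := by
      refine subset_antisymm (endPos_mono ⟨[a], rfl⟩) ?_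
      rw [← hv]
      exact endPos_mono hax_suf
    have hj₀ax : i₀ - 1 + x.length ∈ EndPos y (a :: x) := by rw [hE]; exact hj₀
    have hax_inf : (a :: x) <:+: y := infix_of_endPos hj₀ax
    have hLa : IsLrepOf y (a :: x) (a :: x) := by
      refine ⟨rfl, fun v' hv' => ?_⟩
      by_contra hlen'
      push_neg at hlen'
      have hi₁ := endPos_beg hj₀ax
      have hi₁v' : i₀ - 1 + x.length - (a :: x).length + 1 ∈ BegPos y v' := by
        rw [hv']; exact hi₁
      have hpref : (a :: x) <+: v' :=
        prefix_of_prefix_length_le (begPos_mem_iff.1 hi₁).2.2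
          (begPos_mem_iff.1 hi₁v').2.2 (le_of_lt hlen')
      obtain ⟨t, ht⟩ := hpref
      have ht' : v' = a :: (x ++ t) := by rw [← ht]; simp
      have hBeq : BegPos y (x ++ t) = BegPos y x := by
        refine subset_antisymm (begPos_mono (prefix_append x t)) ?_
        intro i hi
        have hiE : i - 1 + x.length ∈ EndPos y (a :: x) := by
          rw [hE]; exact begPos_end hi
        have hi2 : 2 ≤ i := by
          have h1 := hiE.1
          have h2 := (begPos_mem_iff.1 hi).1
          simp only [length_cons] at h1
          omega
        have hb := endPos_beg hiE
        have harith : i - 1 + x.length - (a :: x).length + 1 = i - 1 := by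
          simp only [length_cons]; omega
        rw [harith] at hb
        have hb' : i - 1 ∈ BegPos y v' := by rw [hv']; exact hb
        rw [ht'] at hb'
        have := begPos_cons hb'
        have hii : i - 1 + 1 = i := by omega
        rwa [hii] at this
      have hle := hlmax _ hBeq
      simp only [length_append] at hle
      have htnil : t.length = 0 := by omega
      have : v'.length = x.length + 1 := by rw [ht']; simp [htnil]
      simp only [length_cons] at hlen'
      omega
    have hcard : (BegPos y (a :: x)).ncard = (BegPos y x).ncard := by
      rw [← endPos_ncard, ← endPos_ncard, hE]
    exact h a hax_inf hLa hcard
end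

section
/- Let y be a string of length n > 2 over an alphabet Σ. Then the number of distinct sets EndPos_y(x) over all x ∈ Substr(y) is at most 2n − 1. (Equivalently, the DAWG of y has at most 2n − 1 nodes.) -/
open List

/-!
For nonempty `x`, the sets `EndPos y x` are nonempty subsets of `{1, …, n}`, and any two of them
are disjoint or nested, because two strings ending at a common position are suffix-comparable.
A laminar family of nonempty subsets of an `n`-set that omits the whole set has at most `2n - 2`
members, and `EndPos y [] = {0, …, n}` adds one more. The whole set `{1, …, n}` occurs as
`EndPos y x` with `x ≠ []` only when `y` is a power of one letter, and then its substrings are the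
`n + 1` powers of that letter.
-/

def IsLaminar {β : Type*} (F : Set (Set β)) : Prop :=
  ∀ A ∈ F, ∀ B ∈ F, Disjoint A B ∨ A ⊆ B ∨ B ⊆ A

namespace IsLaminar

open Set

variable {β : Type*} {F F' : Set (Set β)}

theorem mono (hF : IsLaminar F) (h : F' ⊆ F) : IsLaminar F' :=
  fun A hA B hB => hF A (h hA) B (h hB)

/-- Splitting at a maximal member `M`, the family lives in `M` and in `G \ M`, and each part
contributes at most `2 |·| - 1` members, the extra one being the ground set of the part. -/
theorem ncard_le_two_mul_ncard_sub_two (hF : IsLaminar F) {G : Set β} (hG : G.Finite)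
    (hsub : ∀ A ∈ F, A ⊆ G) (hne : ∀ A ∈ F, A.Nonempty) (hGF : G ∉ F) :
    F.ncard ≤ 2 * G.ncard - 2 := by
  induction hn : G.ncard using Nat.strong_induction_on generalizing G F with
  | _ n IH =>
  have hFfin : F.Finite := hG.finite_subsets.subset hsub
  have part_le : ∀ H ⊂ G, H.Nonempty → ∀ F' ⊆ F, (∀ A ∈ F', A ⊆ H) →
      F'.ncard + 1 ≤ 2 * H.ncard := by
    intro H hHG hH F' hF'F hF'H
    have hHfin : H.Finite := hG.subset hHG.subset
    have hlt : H.ncard < n := hn ▸ ncard_lt_ncard hHG hG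
    have hrest : (F' \ {H}).ncard ≤ 2 * H.ncard - 2 :=
      IH _ hlt (hF.mono (sdiff_subset.trans hF'F)) hHfin (fun A hA => hF'H A hA.1)
        (fun A hA => hne A (hF'F hA.1)) (fun h => h.2 rfl) rfl
    have hsplit := ncard_le_ncard_sdiff_add_ncard F' {H}
    have hHpos := (ncard_pos hHfin).mpr hH
    rw [ncard_singleton] at hsplit
    omega
  obtain rfl | hFne := F.eq_empty_or_nonempty
  · simp
  obtain ⟨M, hMF, hMmax⟩ := hFfin.exists_maximal hFne
  have hMG : M ⊂ G := ssubset_of_subset_of_ne (hsub M hMF) fun h => hGF (h ▸ hMF)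
  have hcover : F ⊆ {A ∈ F | A ⊆ M} ∪ {A ∈ F | A ⊆ G \ M} := by
    intro A hA
    rcases hF A hA M hMF with hdisj | hAM | hMA
    · exact Or.inr ⟨hA, subset_sdiff.mpr ⟨hsub A hA, hdisj⟩⟩
    · exact Or.inl ⟨hA, hAM⟩
    · exact Or.inl ⟨hA, hMmax hA hMA⟩
  have hM := part_le M hMG (hne M hMF) _ (sep_subset _ _) fun A hA => hA.2
  have hGM := part_le (G \ M) (sdiff_lt hMG.subset (hne M hMF).ne_empty)
    (nonempty_of_ssubset hMG) _ (sep_subset _ _) fun A hA => hA.2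
  have hcard : (G \ M).ncard + M.ncard = n := hn ▸ ncard_sdiff_add_ncard_of_subset hMG.subset hG
  have hFle := (ncard_le_ncard hcover
    (hFfin.subset (union_subset (sep_subset _ _) (sep_subset _ _)))).trans (ncard_union_le _ _)
  omega

end IsLaminar

section EndPos

variable {α : Type*}

theorem endPos_subset_Icc (y : List α) {x : List α} (hx : x ≠ []) :
    EndPos y x ⊆ Set.Icc 1 y.length :=
  fun _ hi => ⟨(length_pos_iff.mpr hx).trans_le hi.1, hi.2.1⟩

theorem endPos_nonempty {y x : List α} (h : x <:+: y) : (EndPos y x).Nonempty := by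
  obtain ⟨s, t, rfl⟩ := h
  refine ⟨s.length + x.length, Nat.le_add_left _ _, by simp, ?_⟩
  rw [take_left' (by simp)]
  exact suffix_append s x

theorem endPos_subset_of_isSuffix (y : List α) {u v : List α} (h : u <:+ v) :
    EndPos y v ⊆ EndPos y u :=
  fun _ hi => ⟨h.length_le.trans hi.1, hi.2.1, h.trans hi.2.2⟩

theorem isLaminar_range_endPos (y : List α) : IsLaminar (Set.range (EndPos y)) := by
  rintro _ ⟨u, rfl⟩ _ ⟨v, rfl⟩
  refine or_iff_not_imp_left.mpr fun hmeet => ?_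
  obtain ⟨i, hiu, hiv⟩ := Set.not_disjoint_iff.mp hmeet
  rcases suffix_or_suffix_of_suffix hiu.2.2 hiv.2.2 with h | h
  · exact Or.inr (endPos_subset_of_isSuffix y h)
  · exact Or.inl (endPos_subset_of_isSuffix y h)

/-- A nonempty `x` ending at position `1` is a single letter, which then ends at every position. -/
theorem eq_replicate_of_endPos_eq_Icc {y x : List α} (hy : y ≠ []) (hx : x ≠ [])
    (hfull : EndPos y x = Set.Icc 1 y.length) : ∃ c, y = replicate y.length c := by
  have hlen := length_pos_iff.mpr hy
  have h1 : 1 ∈ EndPos y x := hfull ▸ ⟨le_rfl, hlen⟩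
  obtain ⟨c, rfl⟩ := length_eq_one_iff.mp (le_antisymm h1.1 (length_pos_iff.mpr hx))
  refine ⟨c, eq_replicate_iff.mpr ⟨rfl, fun b hb => ?_⟩⟩
  obtain ⟨j, hj, rfl⟩ := getElem_of_mem hb
  have hlast := singleton_suffix_iff_getLast?_eq_some.mp
    ((hfull ▸ ⟨by omega, by omega⟩ : j + 1 ∈ EndPos y [c]).2.2)
  simpa [getLast?_take, getElem?_eq_getElem hj] using hlast

theorem ncard_image_endPos_replicate_le (n : ℕ) (c : α) :
    (EndPos (replicate n c) '' {x | x <:+: replicate n c}).ncard ≤ n + 1 := by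
  have hinfixes : {x | x <:+: replicate n c} = (replicate · c) '' Set.Iic n := by
    ext x
    simp only [Set.mem_ofPred_eq, infix_replicate_iff, Set.mem_image, Set.mem_Iic]
    constructor
    · exact fun ⟨hle, hx⟩ => ⟨x.length, hle, hx.symm⟩
    · rintro ⟨k, hk, rfl⟩
      simpa using hk
  rw [hinfixes, Set.image_image]
  exact (Set.ncard_image_le (Set.finite_Iic n)).trans_eq (Set.ncard_Iic_nat n)

end EndPos

theorem dawg_node_bound {α : Type*} (y : List α) (h : 2 < y.length) :
    ((fun x : List α => EndPos y x) '' {x | x <:+: y}).ncard ≤ 2 * y.length - 1 := by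
  change (EndPos y '' _).ncard ≤ _
  by_cases hconst : ∃ c, y = replicate y.length c
  · obtain ⟨c, hc⟩ := hconst
    have hcount := ncard_image_endPos_replicate_le y.length c
    rw [← hc] at hcount
    omega
  set F := EndPos y '' {x | x <:+: y ∧ x ≠ []}
  have hF : F.ncard ≤ 2 * y.length - 2 := by
    have hlam : IsLaminar F := (isLaminar_range_endPos y).mono (Set.image_subset_range _ _)
    refine hlam.ncard_le_two_mul_ncard_sub_two (Set.finite_Icc 1 y.length) ?_ ?_ ?_
      |>.trans_eq (by simp)
    · rintro _ ⟨x, ⟨-, hx⟩, rfl⟩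
      exact endPos_subset_Icc y hx
    · rintro _ ⟨x, ⟨hx, -⟩, rfl⟩
      exact endPos_nonempty hx
    · rintro ⟨x, ⟨-, hx⟩, hfull⟩
      exact hconst (eq_replicate_of_endPos_eq_Icc (by rintro rfl; simp at h) hx hfull)
  have hsplit : {x | x <:+: y} = insert [] {x | x <:+: y ∧ x ≠ []} := by
    ext x
    by_cases hx : x = [] <;> simp [hx]
  calc _ = (insert (EndPos y []) F).ncard := by rw [hsplit, Set.image_insert_eq]
    _ ≤ F.ncard + 1 := Set.ncard_insert_le _ _
    _ ≤ 2 * y.length - 1 := by omega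
end

section
/- Let y be a string over an alphabet Σ whose last character occurs exactly once in y. Let x ∈ Substr(y) satisfy x = Lrep_y(x), let a ∈ Σ with a·x ∈ Substr(y), and suppose Lrep_y(a·x) = a·x·β for some nonempty string β ∈ Σ⁺ (i.e., the Weiner link (x, a, a·x·β) is implicit). Then x·β = Lrep_y(x·β), i.e., x·β is a node of the suffix tree of y, so the Weiner link (x·β, a, a·x·β) is explicit. -/
open List

lemma mem_begpos_iff {α : Type*} {y u : List α} (hu : u ≠ []) (i : ℕ) :
    i ∈ BegPos y u ↔ 1 ≤ i ∧ u <+: y.drop (i - 1) := by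
  constructor
  · rintro ⟨h1, _, h3⟩; exact ⟨h1, h3⟩
  · rintro ⟨h1, h3⟩
    refine ⟨h1, ?_, h3⟩
    have hlen := h3.length_le
    rw [List.length_drop] at hlen
    have hpos : 1 ≤ u.length := List.length_pos_iff.2 hu
    omega

lemma drop_eq_cons_drop {α : Type*} {y : List α} {a : α} {u : List α} {i : ℕ}
    (h : (a :: u) <+: y.drop (i - 1)) (hi : 1 ≤ i) :
    y.drop (i - 1) = a :: y.drop i := by
  obtain ⟨r, hr⟩ := h
  have h1 : y.drop (i - 1) = a :: (u ++ r) := by rw [← hr]; simp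
  have h2 : u ++ r = y.drop i := by
    have ht := congrArg List.tail h1
    rw [List.tail_drop] at ht
    rw [show i - 1 + 1 = i from by omega] at ht
    simpa using ht.symm
  rw [h1, h2]

lemma begpos_cons_succ {α : Type*} {y : List α} {a : α} {u : List α} {i : ℕ}
    (hu : u ≠ []) (h : i ∈ BegPos y (a :: u)) : (i + 1) ∈ BegPos y u := by
  rw [mem_begpos_iff (by simp)] at h
  obtain ⟨h1, h3⟩ := h
  have hd := drop_eq_cons_drop h3 h1
  rw [mem_begpos_iff hu]
  refine ⟨by omega, ?_⟩
  rw [show i + 1 - 1 = i from rfl]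
  have : a :: u <+: a :: y.drop i := hd ▸ h3
  exact (List.cons_prefix_cons.mp this).2

lemma begpos_cons_of_succ {α : Type*} {y : List α} {a : α} {u u' : List α} {i : ℕ}
    (h : i ∈ BegPos y (a :: u)) (h' : (i + 1) ∈ BegPos y u') (hu' : u' ≠ []) :
    i ∈ BegPos y (a :: u') := by
  rw [mem_begpos_iff (by simp)] at h ⊢
  rw [mem_begpos_iff hu'] at h'
  obtain ⟨h1, h3⟩ := h
  have hd := drop_eq_cons_drop h3 h1
  refine ⟨h1, ?_⟩
  rw [hd]
  rw [show i + 1 - 1 = i from rfl] at h'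
  exact List.cons_prefix_cons.mpr ⟨rfl, h'.2⟩

lemma begpos_of_prefix {α : Type*} {y u w : List α} {i : ℕ}
    (hu : u ≠ []) (hp : u <+: w) (h : i ∈ BegPos y w) : i ∈ BegPos y u := by
  have hw : w ≠ [] := by
    intro hw; rw [hw, List.prefix_nil] at hp; exact hu hp
  rw [mem_begpos_iff hw] at h
  rw [mem_begpos_iff hu]
  exact ⟨h.1, hp.trans h.2⟩

theorem implicit_weiner_link_target {α : Type*} [DecidableEq α]
    (y : List α) (hy : y ≠ []) (hlast : y.count (y.getLast hy) = 1)
    (x : List α) (hx : x <:+: y) (hl : IsLrepOf y x x)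
    (a : α) (hax : (a :: x) <:+: y)
    (β : List α) (hβ : β ≠ [])
    (hW : IsLrepOf y ((a :: x) ++ β) (a :: x)) :
    IsLrepOf y (x ++ β) (x ++ β) := by
  have hxβ : x ++ β ≠ [] := by simp [hβ]
  refine ⟨rfl, ?_⟩
  intro v hv
  by_contra hlen
  push_neg at hlen
  -- an occurrence of a :: x
  obtain ⟨s, t, hst⟩ := hax
  have hdrop : y.drop s.length = (a :: x) ++ t := by
    rw [← hst, List.append_assoc, List.drop_left]
  have hi0 : (s.length + 1) ∈ BegPos y (a :: x) := by
    rw [mem_begpos_iff (by simp)]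
    refine ⟨by omega, ?_⟩
    rw [show s.length + 1 - 1 = s.length from rfl, hdrop]
    exact List.prefix_append _ _
  have hi0' : (s.length + 1) ∈ BegPos y ((a :: x) ++ β) := by
    rw [hW.1]; exact hi0
  have hi0'' : (s.length + 1) ∈ BegPos y (a :: (x ++ β)) := by
    simpa using hi0'
  have hj : (s.length + 2) ∈ BegPos y (x ++ β) := begpos_cons_succ hxβ hi0''
  have hjv : (s.length + 2) ∈ BegPos y v := by rw [hv]; exact hj
  -- x ++ β is a proper prefix of v
  have hpfx : (x ++ β) <+: v := by
    rw [mem_begpos_iff hxβ] at hj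
    have hv' : v ≠ [] := by
      intro h; rw [h] at hlen; simp at hlen
    rw [mem_begpos_iff hv'] at hjv
    rcases List.prefix_or_prefix_of_prefix hj.2 hjv.2 with h | h
    · exact h
    · exact absurd h.length_le (by omega)
  obtain ⟨γ, hγ⟩ := hpfx
  have hγne : γ ≠ [] := by
    intro h; rw [h, List.append_nil] at hγ; rw [← hγ] at hlen; omega
  obtain ⟨c, γ', rfl⟩ := List.exists_cons_of_ne_nil hγne
  have hcpfx : (x ++ β) ++ [c] <+: v := by
    rw [← hγ]; exact ⟨γ', by simp⟩
  -- every occurrence of x ++ β is followed by c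
  have H : ∀ i, i ∈ BegPos y (x ++ β) → i ∈ BegPos y ((x ++ β) ++ [c]) := by
    intro i hi
    have hiv : i ∈ BegPos y v := by rw [hv]; exact hi
    have hv' : v ≠ [] := by
      intro h; rw [h, List.prefix_nil] at hcpfx; simp at hcpfx
    rw [mem_begpos_iff hv'] at hiv
    rw [mem_begpos_iff (by simp)]
    exact ⟨hiv.1, hcpfx.trans hiv.2⟩
  -- then a :: x ++ β ++ [c] has the same BegPos as a :: x, contradicting hW
  have hkey : BegPos y ((a :: x) ++ (β ++ [c])) = BegPos y (a :: x) := by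
    ext i
    constructor
    · intro hi
      have h1 : i ∈ BegPos y ((a :: x) ++ β) :=
        begpos_of_prefix (by simp) ⟨[c], by simp⟩ hi
      rw [hW.1] at h1; exact h1
    · intro hi
      have h1 : i ∈ BegPos y ((a :: x) ++ β) := by rw [hW.1]; exact hi
      have h2 : i ∈ BegPos y (a :: (x ++ β)) := by simpa using h1
      have h3 : (i + 1) ∈ BegPos y (x ++ β) := begpos_cons_succ hxβ h2
      have h4 : (i + 1) ∈ BegPos y ((x ++ β) ++ [c]) := H _ h3
      have h5 : i ∈ BegPos y (a :: ((x ++ β) ++ [c])) :=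
        begpos_cons_of_succ h2 h4 (by simp)
      simpa using h5
  have := hW.2 _ hkey
  simp at this
end

section
/- Let y be a string over an alphabet Σ whose last character occurs exactly once in y. Let w ∈ Substr(y) satisfy w = Lrep_y(w), and let a ∈ Σ be such that a·w ∈ Substr(y) and a·w = Lrep_y(a·w). Let p be a proper prefix of w with p = Lrep_y(p), and suppose that every proper prefix q of a·w with |q| ≥ |a·p| satisfies q ≠ Lrep_y(q). Then Lrep_y(a·p) = a·w, i.e., (p, a, a·w) is an implicit Weiner link of the suffix tree of y. -/
open List

theorem implicit_weiner_link_from_ancestor {α : Type*} [DecidableEq α]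
    (y : List α) (hy : y ≠ []) (hlast : y.count (y.getLast hy) = 1)
    (w : List α) (hw : w <:+: y) (hlw : IsLrepOf y w w)
    (a : α) (haw : (a :: w) <:+: y) (hlaw : IsLrepOf y (a :: w) (a :: w))
    (p : List α) (hp : p <+: w) (hpw : p ≠ w) (hlp : IsLrepOf y p p)
    (hq : ∀ q : List α, q <+: (a :: w) → q ≠ (a :: w) →
      (a :: p).length ≤ q.length → ¬ IsLrepOf y q q) :
    IsLrepOf y (a :: w) (a :: p) := by
  classical
  have hmono : ∀ u v : List α, u <+: v → BegPos y v ⊆ BegPos y u := by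
    intro u v huv i hi
    obtain ⟨h1, h2, h3⟩ := hi
    have hlen := huv.length_le
    exact ⟨h1, by omega, huv.trans h3⟩
  obtain ⟨s, t, hst⟩ := haw
  set i₀ := s.length + 1 with hi₀def
  have hdrop : y.drop (i₀ - 1) = (a :: w) ++ t := by
    rw [← hst]; simp [hi₀def]
  have hi0 : i₀ ∈ BegPos y (a :: w) := by
    refine ⟨by omega, ?_, hdrop ▸ List.prefix_append _ _⟩
    have : y.length = s.length + (a :: w).length + t.length := by
      rw [← hst]; simp; omega
    omega
  have hap : (a :: p) <+: (a :: w) := by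
    rw [List.cons_prefix_cons]; exact ⟨rfl, hp⟩
  have hsub : BegPos y (a :: w) ⊆ BegPos y (a :: p) := hmono _ _ hap
  have hi0p : i₀ ∈ BegPos y (a :: p) := hsub hi0
  have hbound : ∀ v : List α, BegPos y v = BegPos y (a :: p) → v.length ≤ y.length := by
    intro v hv
    have hiv : i₀ ∈ BegPos y v := hv ▸ hi0p
    obtain ⟨-, -, h3⟩ := hiv
    have := h3.length_le
    simp [List.length_drop] at this
    omega
  set P : ℕ → Prop := fun n => ∃ v : List α, v.length = n ∧ BegPos y v = BegPos y (a :: p)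
    with hPdef
  have hPap : P (a :: p).length := ⟨a :: p, rfl, rfl⟩
  have hPle : (a :: p).length ≤ y.length := hbound _ rfl
  have hPk : P (Nat.findGreatest P y.length) := Nat.findGreatest_spec hPle hPap
  obtain ⟨L, hLlen, hLB⟩ := hPk
  have hmax : ∀ v : List α, BegPos y v = BegPos y (a :: p) → v.length ≤ L.length := by
    intro v hv
    by_contra h
    push_neg at h
    rw [hLlen] at h
    exact Nat.findGreatest_is_greatest h (hbound v hv) ⟨v, rfl, hv⟩
  have hi0L : i₀ ∈ BegPos y L := hLB ▸ hi0p
  have hcomp : L <+: (a :: w) ∨ (a :: w) <+: L :=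
    List.prefix_or_prefix_of_prefix hi0L.2.2 hi0.2.2
  have key : BegPos y (a :: w) = BegPos y (a :: p) := by
    rcases hcomp with hc | hc
    · by_cases hL : L = a :: w
      · rw [← hL]; exact hLB
      · exact absurd ⟨rfl, fun v hv => hmax v (by rw [hv, hLB])⟩
          (hq L hc hL (hmax (a :: p) rfl))
    · have h1 : BegPos y L ⊆ BegPos y (a :: w) := hmono _ _ hc
      exact Set.Subset.antisymm hsub (hLB ▸ h1)
  exact ⟨key, fun v hv => hlaw.2 v (by rw [hv, ← key])⟩
end

section
/- Let y be a string over an alphabet Σ. For every x ∈ Substr(y), (Lrep_y(x))^R = Rrep_{y^R}(x^R), i.e., the reversal of the longest string left-equivalent to x in y equals the longest string right-equivalent to x^R in the reversed string y^R. (This underlies the fact that the suffix-tree nodes of y with their Weiner links form the DAWG of y^R.) -/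
open List

/-
Reading `y` backwards turns an occurrence of `x` starting at position `i` into an occurrence of
`xᴿ` ending at position `|y| + 1 - i`. This bijection between `BegPos y x` and `EndPos yᴿ xᴿ`
does not depend on `x`, so `u ↦ uᴿ` maps left-equivalence classes of `y` onto right-equivalence
classes of `yᴿ`, preserving lengths; hence it maps longest members to longest members.
-/

lemma mem_endPos_reverse_iff {α : Type*} (y x : List α) (j : ℕ) :
    j ∈ EndPos y.reverse x.reverse ↔ j ≤ y.length ∧ y.length + 1 - j ∈ BegPos y x := by
  simp only [EndPos, BegPos, Set.mem_ofPred_eq, length_reverse, take_reverse, reverse_suffix]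
  constructor
  · rintro ⟨-, hj, hpre⟩
    have hlen := hpre.length_le
    rw [length_drop] at hlen
    exact ⟨hj, by omega, by omega, by rwa [show y.length + 1 - j - 1 = y.length - j by omega]⟩
  · rintro ⟨hj, -, -, hpre⟩
    rw [show y.length + 1 - j - 1 = y.length - j by omega] at hpre
    have hlen := hpre.length_le
    rw [length_drop] at hlen
    exact ⟨by omega, hj, hpre⟩

lemma mem_begPos_iff_mem_endPos_reverse {α : Type*} (y x : List α) (i : ℕ) :
    i ∈ BegPos y x ↔
      1 ≤ i ∧ i ≤ y.length + 1 ∧ y.length + 1 - i ∈ EndPos y.reverse x.reverse := by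
  constructor
  · intro hi
    have hi_le : i ≤ y.length + 1 := by have := hi.2.1; omega
    rw [mem_endPos_reverse_iff, show y.length + 1 - (y.length + 1 - i) = i by omega]
    exact ⟨hi.1, hi_le, by have := hi.1; omega, hi⟩
  · rintro ⟨-, hi_le, hi⟩
    rw [mem_endPos_reverse_iff, show y.length + 1 - (y.length + 1 - i) = i by omega] at hi
    exact hi.2

lemma endPos_reverse_eq_iff {α : Type*} (y u v : List α) :
    EndPos y.reverse u.reverse = EndPos y.reverse v.reverse ↔ BegPos y u = BegPos y v := by
  constructor
  · intro h
    ext i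
    rw [mem_begPos_iff_mem_endPos_reverse, mem_begPos_iff_mem_endPos_reverse, h]
  · intro h
    ext j
    rw [mem_endPos_reverse_iff, mem_endPos_reverse_iff, h]

theorem lrep_reverse_eq_rrep_general {α : Type*} (y x : List α)
    (l : List α) (hl : IsLrepOf y l x) :
    IsRrepOf y.reverse l.reverse x.reverse := by
  refine ⟨(endPos_reverse_eq_iff y l x).2 hl.1, fun v hv => ?_⟩
  have hbeg : BegPos y v.reverse = BegPos y x :=
    (endPos_reverse_eq_iff y v.reverse x).1 (by rwa [reverse_reverse])
  simpa using hl.2 v.reverse hbeg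

theorem lrep_reverse_eq_rrep {α : Type*} (y x : List α) (hx : x <:+: y)
    (l : List α) (hl : IsLrepOf y l x) :
    IsRrepOf y.reverse l.reverse x.reverse :=
  lrep_reverse_eq_rrep_general y x l hl
end

section
/- Let y be a string over an alphabet Σ whose last character occurs exactly once in y. Let L = { x ∈ Substr(y) : x = Lrep_y(x) } and R = { x ∈ Substr(y) : x = Rrep_y(x) }. Let x ∈ Σ* and α ∈ Σ⁺ be such that x ∈ L ∪ R, α·x ∈ L ∪ R, and for every nonempty proper suffix γ of α (1 ≤ |γ| < |α|), γ·x ∉ L ∪ R (i.e., there is a backward edge of the affix tree of y from x to α·x). Let a be the last character of α. Then (x ∈ L and α·x ∉ L) if and only if (x ∈ L, a·x ∈ Substr(y), and a·x ∉ L), i.e., if and only if (x, a, a·x) is an implicit modified Weiner link of the suffix tree of y. -/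
open List

/-!
For the forward direction, `[a]` is a nonempty suffix of `α`, so the backward-edge condition
rules out `a·x ∈ L` unless `α = [a]`. For the backward direction, suffix-tree nodes are closed
under taking suffixes that occur in `y`: a right extension of `a·x` with the same beginning
positions yields one of `α·x`, so `α·x ∈ L` forces `a·x ∈ L`.
-/

section Suffixes

variable {α : Type*} {y : List α}

lemma mem_begPos {x : List α} {i : ℕ} :
    i ∈ BegPos y x ↔ 1 ≤ i ∧ i + x.length ≤ y.length + 1 ∧ x <+: y.drop (i - 1) := by
  constructor
  · rintro ⟨h1, h2, h3⟩
    have := h3.length_le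
    rw [length_drop] at this
    exact ⟨h1, by omega, h3⟩
  · rintro ⟨h1, h2, h3⟩
    exact ⟨h1, by omega, h3⟩

lemma begPos_subset_begPos_of_prefix {u w : List α} (h : u <+: w) :
    BegPos y w ⊆ BegPos y u := by
  intro i hi
  obtain ⟨h1, h2, h3⟩ := mem_begPos.mp hi
  exact mem_begPos.mpr ⟨h1, by have := h.length_le; omega, h.trans h3⟩

lemma exists_mem_begPos_of_infix {x : List α} (h : x <:+: y) : ∃ i, i ∈ BegPos y x := by
  obtain ⟨s, t, rfl⟩ := h
  refine ⟨s.length + 1, mem_begPos.mpr ⟨by omega, by simp; omega, ?_⟩⟩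
  rw [Nat.add_sub_cancel, append_assoc, drop_left]
  exact prefix_append x t

lemma begPos_prepend_append_eq {p s t : List α} (h : BegPos y (s ++ t) = BegPos y s) :
    BegPos y (p ++ s ++ t) = BegPos y (p ++ s) := by
  refine (begPos_subset_begPos_of_prefix (prefix_append _ _)).antisymm fun i hi => ?_
  obtain ⟨hi1, hlen, u, hu⟩ := mem_begPos.mp hi
  have hdrop : y.drop (i + p.length - 1) = s ++ u := by
    rw [show i + p.length - 1 = (i - 1) + p.length by omega, ← drop_drop, ← hu, append_assoc,
      drop_left]
  have hs : i + p.length ∈ BegPos y s :=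
    mem_begPos.mpr ⟨by omega, by simp at hlen; omega, hdrop ▸ prefix_append s u⟩
  rw [← h] at hs
  obtain ⟨-, hlen', hst⟩ := mem_begPos.mp hs
  rw [hdrop, prefix_append_right_inj] at hst
  refine mem_begPos.mpr ⟨hi1, by simp at hlen' ⊢; omega, ?_⟩
  rw [← hu, append_assoc, append_assoc, prefix_append_right_inj, prefix_append_right_inj]
  exact hst

lemma exists_begPos_append_eq_of_not_isLrepOf {s : List α} (hs : s <:+: y)
    (hrep : ¬ IsLrepOf y s s) : ∃ t ≠ [], BegPos y (s ++ t) = BegPos y s := by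
  simp only [IsLrepOf, true_and, not_forall, not_le] at hrep
  obtain ⟨v, hv, hlen⟩ := hrep
  obtain ⟨i, hi⟩ := exists_mem_begPos_of_infix hs
  have hiv : i ∈ BegPos y v := hv ▸ hi
  obtain ⟨t, rfl⟩ := prefix_of_prefix_length_le (mem_begPos.mp hi).2.2 (mem_begPos.mp hiv).2.2
    hlen.le
  exact ⟨t, by rintro rfl; simp at hlen, hv⟩

/-- A right extension of `s` that keeps its occurrences is also one of `p ++ s`. -/
lemma IsLrepOf.of_append_left {p s : List α} (h : IsLrepOf y (p ++ s) (p ++ s))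
    (hs : s <:+: y) : IsLrepOf y s s := by
  by_contra hrep
  obtain ⟨t, ht, hst⟩ := exists_begPos_append_eq_of_not_isLrepOf hs hrep
  exact ht (by simpa using h.2 _ (begPos_prepend_append_eq hst))

end Suffixes

theorem affix_backward_edge_weiner_general {α : Type*} [DecidableEq α]
    (y : List α)
    (L R : Set (List α))
    (hL : L = {z | z <:+: y ∧ IsLrepOf y z z})
    (hR : R = {z | z <:+: y ∧ IsRrepOf y z z})
    (x al : List α) (hal : al ≠ [])
    (halx : al ++ x ∈ L ∪ R)
    (hback : ∀ γ : List α, γ <:+ al → γ ≠ [] → γ ≠ al → γ ++ x ∉ L ∪ R) :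
    (x ∈ L ∧ al ++ x ∉ L) ↔
      (x ∈ L ∧ (al.getLast hal :: x) <:+: y ∧ (al.getLast hal :: x) ∉ L) := by
  subst hL hR
  set a := al.getLast hal
  have hsplit : al.dropLast ++ [a] = al := dropLast_append_getLast hal
  have hax : al.dropLast ++ a :: x = al ++ x := by
    rw [← singleton_append, ← append_assoc, hsplit]
  constructor
  · rintro ⟨hxL, hnL⟩
    have halx_infix : al ++ x <:+: y := by rcases halx with h | h <;> exact h.1
    refine ⟨hxL, (IsSuffix.isInfix ⟨_, hax⟩).trans halx_infix, fun hmem => ?_⟩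
    by_cases hone : [a] = al
    · exact hnL (hone ▸ hmem)
    · exact hback [a] ⟨al.dropLast, hsplit⟩ (cons_ne_nil a []) hone (Or.inl hmem)
  · rintro ⟨hxL, hinf, hnL⟩
    refine ⟨hxL, fun ⟨_, hrep⟩ => hnL ⟨hinf, ?_⟩⟩
    rw [← hax] at hrep
    exact hrep.of_append_left hinf

theorem affix_backward_edge_weiner {α : Type*} [DecidableEq α]
    (y : List α) (hy : y ≠ []) (hlast : y.count (y.getLast hy) = 1)
    (L R : Set (List α))
    (hL : L = {z | z <:+: y ∧ IsLrepOf y z z})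
    (hR : R = {z | z <:+: y ∧ IsRrepOf y z z})
    (x al : List α) (hal : al ≠ [])
    (hx : x ∈ L ∪ R) (halx : al ++ x ∈ L ∪ R)
    (hback : ∀ γ : List α, γ <:+ al → γ ≠ [] → γ ≠ al → γ ++ x ∉ L ∪ R) :
    (x ∈ L ∧ al ++ x ∉ L) ↔
      (x ∈ L ∧ (al.getLast hal :: x) <:+: y ∧ (al.getLast hal :: x) ∉ L) :=
  affix_backward_edge_weiner_general y L R hL hR x al hal halx hback
end

section
/- Let y be a string over an alphabet Σ and let x ∈ Substr(y) be nonempty. Then x = Rrep_y(x) if and only if x is a prefix of y or there exist two distinct characters a, b ∈ Σ with a·x ∈ Substr(y) and b·x ∈ Substr(y). -/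
open List

theorem rrep_iff_prefix_or_left_branching {α : Type*} (y x : List α)
    (hx : x <:+: y) (hne : x ≠ []) :
    IsRrepOf y x x ↔
      x <+: y ∨ ∃ a b : α, a ≠ b ∧ (a :: x) <:+: y ∧ (b :: x) <:+: y := by
  constructor
  · rintro ⟨-, hmax⟩
    by_contra hcon
    push_neg at hcon
    obtain ⟨hnp, hnb⟩ := hcon
    -- x occurs, not as a prefix, so it has a preceding character a
    obtain ⟨s, t, hst⟩ := hx
    have hs : s ≠ [] := by
      rintro rfl
      exact hnp ⟨t, by simpa using hst⟩
    obtain ⟨s', a, rfl⟩ := (List.eq_nil_or_concat s).resolve_left hs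
    have hax : (a :: x) <:+: y := ⟨s', t, by simpa using hst⟩
    -- show EndPos y (a :: x) = EndPos y x
    have hEq : EndPos y (a :: x) = EndPos y x := by
      ext i
      constructor
      · rintro ⟨h1, h2, h3⟩
        exact ⟨by simpa using Nat.le_of_succ_le h1, h2,
          (List.suffix_cons a x).trans h3⟩
      · rintro ⟨h1, h2, h3⟩
        have hlen : (y.take i).length = i := by
          simp [Nat.min_eq_left h2]
        have hlt : x.length < i := by
          rcases Nat.lt_or_ge x.length i with h | h
          · exact h
          · exfalso
            have : x = y.take i := h3.eq_of_length_le (by rw [hlen]; exact h)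
            exact hnp (this ▸ y.take_prefix i)
        obtain ⟨u, hu⟩ := h3
        have hune : u ≠ [] := by
          rintro rfl
          simp only [List.nil_append] at hu
          have := congrArg List.length hu
          rw [hlen] at this
          omega
        obtain ⟨u', c, rfl⟩ := (List.eq_nil_or_concat u).resolve_left hune
        have hcx : (c :: x) <:+ y.take i := ⟨u', by simpa using hu⟩
        have hcxy : (c :: x) <:+: y := hcx.isInfix.trans (y.take_prefix i).isInfix
        have hca : c = a := by
          by_contra hca
          exact hnb c a hca hcxy hax
        subst hca
        exact ⟨by simpa using hlt, h2, hcx⟩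
    have := hmax (a :: x) hEq
    simp at this
  · rintro (hp | ⟨a, b, hab, ha, hb⟩)
    · refine ⟨rfl, fun v hv => ?_⟩
      have hx' : x.length ∈ EndPos y x :=
        ⟨le_refl _, hp.length_le, by
          rw [← List.prefix_iff_eq_take.mp hp]⟩
      rw [← hv] at hx'
      exact hx'.1
    · refine ⟨rfl, fun v hv => ?_⟩
      by_contra hlen
      push_neg at hlen
      -- get an end position from a·x and one from b·x
      have key : ∀ c : α, (c :: x) <:+: y → (c :: x) <:+ v := by
        intro c hc
        obtain ⟨s, t, hst⟩ := hc
        set i := s.length + (c :: x).length with hi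
        have hprefix : (s ++ (c :: x)) <+: y := ⟨t, by simpa using hst⟩
        have htake : y.take i = s ++ (c :: x) := by
          have := List.prefix_iff_eq_take.mp hprefix
          simpa [hi] using this.symm
        have hiEnd : i ∈ EndPos y x := by
          refine ⟨by simp [hi]; omega, by simpa [hi] using hprefix.length_le, ?_⟩
          rw [htake]
          exact ((List.suffix_cons c x).trans (List.suffix_append s (c :: x)))
        rw [← hv] at hiEnd
        have hvsuf : v <:+ y.take i := hiEnd.2.2
        have hcsuf : (c :: x) <:+ y.take i := htake ▸ List.suffix_append s (c :: x)
        rcases List.suffix_or_suffix_of_suffix hcsuf hvsuf with h | h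
        · exact h
        · have : v = c :: x := h.eq_of_length_le (by simp; omega)
          exact this ▸ List.suffix_refl v
      have h1 := key a ha
      have h2 := key b hb
      rcases List.suffix_or_suffix_of_suffix h1 h2 with h | h
      · have := h.eq_of_length_le (by simp)
        simp at this
        exact hab this
      · have := h.eq_of_length_le (by simp)
        simp at this
        exact hab this.symm
end

section
/- Let y be a string over an alphabet Σ. A string x ∈ Σ* is a maximal repeat of y if and only if its reversal x^R is a maximal repeat of the reversed string y^R. (Consequently, the CDAWGs of y and of y^R can share the same node set, yielding the symmetric CDAWG.) -/
open List

/-- x is a maximal repeat of y: x occurs at least twice in y and extending x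
by any character on either side strictly decreases its number of occurrences. -/
def MaximalRepeat {α : Type*} (y x : List α) : Prop :=
  x <:+: y ∧ 2 ≤ (BegPos y x).ncard ∧
    (∀ b : α, (BegPos y (x ++ [b])).ncard < (BegPos y x).ncard) ∧
    (∀ a : α, (BegPos y (a :: x)).ncard < (BegPos y x).ncard)

/-! Reversal maps the occurrence of `x` at `y = u ++ x ++ v` to the occurrence of `xᴿ` at
`yᴿ = vᴿ ++ xᴿ ++ uᴿ`, i.e. `i ↦ |y| - |x| + 2 - i` is a bijection from `BegPos y x` onto
`BegPos yᴿ xᴿ`. Hence reversal preserves occurrence counts, and it swaps left and right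
extensions: `(a :: x)ᴿ = xᴿ ++ [a]`. -/

lemma mem_BegPos_iff {α : Type*} {y x : List α} {i : ℕ} :
    i ∈ BegPos y x ↔ ∃ u v : List α, y = u ++ x ++ v ∧ i = u.length + 1 := by
  constructor
  · rintro ⟨hi, hin, v, hv⟩
    have hlen : x.length + v.length = y.length - (i - 1) := by
      simpa using congrArg List.length hv
    refine ⟨y.take (i - 1), v, ?_, ?_⟩
    · rw [append_assoc, hv, take_append_drop]
    · rw [length_take]
      omega
  · rintro ⟨u, v, rfl, rfl⟩
    refine ⟨by omega, by simp; omega, ?_⟩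
    simp

lemma BegPos_reverse {α : Type*} (y x : List α) :
    BegPos y.reverse x.reverse = (fun i => y.length - x.length + 2 - i) '' BegPos y x := by
  ext j
  simp only [Set.mem_image, mem_BegPos_iff]
  constructor
  · rintro ⟨u, v, hy, rfl⟩
    have hy' : y = v.reverse ++ x ++ u.reverse := by
      simpa using congrArg List.reverse hy
    have hlen := congrArg List.length hy'
    simp only [length_append, length_reverse] at hlen
    exact ⟨v.length + 1, ⟨v.reverse, u.reverse, hy', by simp⟩, by omega⟩
  · rintro ⟨_, ⟨u, v, rfl, rfl⟩, rfl⟩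
    exact ⟨v.reverse, u.reverse, by simp, by simp; omega⟩

lemma ncard_BegPos_reverse {α : Type*} (y x : List α) :
    (BegPos y.reverse x.reverse).ncard = (BegPos y x).ncard := by
  rw [BegPos_reverse]
  refine Set.InjOn.ncard_image fun i hi j hj hij => ?_
  have := hi.2.1
  have := hj.2.1
  omega

lemma MaximalRepeat.reverse {α : Type*} {y x : List α} (h : MaximalRepeat y x) :
    MaximalRepeat y.reverse x.reverse := by
  obtain ⟨hsub, htwo, hright, hleft⟩ := h
  refine ⟨reverse_infix.mpr hsub, by rwa [ncard_BegPos_reverse], fun b => ?_, fun a => ?_⟩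
  · rw [← reverse_cons, ncard_BegPos_reverse, ncard_BegPos_reverse]
    exact hleft b
  · rw [← reverse_concat, ncard_BegPos_reverse, ncard_BegPos_reverse]
    exact hright a

theorem maximal_repeat_reverse {α : Type*} (y x : List α) :
    MaximalRepeat y x ↔ MaximalRepeat y.reverse x.reverse :=
  ⟨MaximalRepeat.reverse, fun h => by simpa using h.reverse⟩
end

section
/- Let y be a string over an alphabet Σ. For any characters a, b ∈ Σ and any string x ∈ Σ*, the string a·x·b is a minimal absent word of y if and only if x ∈ Substr(y) with x = Rrep_y(x), x·b ∈ Substr(y), a·x ∈ Substr(y), and a·x·b ∉ Substr(y). -/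
open List

/-
The proper factors of `a·x·b` are factors of `a·x` or of `x·b`, so `a·x·b` is a MAW exactly
when `a·x` and `x·b` occur and `a·x·b` does not. In that situation `x` is its own `Rrep`:
a longer string `v` with the end positions of `x` would, at an end position of `x` followed
by `b`, have `a·x` as a suffix, and then `a·x·b` would occur.
-/

section Occurrences

variable {α : Type*} {y x u v w : List α} {a b : α}

theorem List.infix_cons_append_singleton (hw : w <:+: a :: (x ++ [b]))
    (hne : w ≠ a :: (x ++ [b])) :
    w <:+: a :: x ∨ w <:+: x ++ [b] := by
  rcases infix_cons_iff.mp hw with hpre | hinf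
  · rw [← cons_append, prefix_concat_iff] at hpre
    exact .inl (hpre.resolve_left hne).isInfix
  · exact .inr hinf

theorem List.append_singleton_suffix_append_singleton {l : List α} {c : α} :
    u ++ [b] <:+ l ++ [c] ↔ u <:+ l ∧ b = c := by
  rw [← reverse_prefix]
  simp [and_comm]

theorem isMAW_cons_append_singleton_iff :
    IsMAW y (a :: (x ++ [b])) ↔
      (a :: x) <:+: y ∧ (x ++ [b]) <:+: y ∧ ¬ (a :: (x ++ [b])) <:+: y := by
  constructor
  · rintro ⟨habsent, hproper⟩
    refine ⟨hproper _ (prefix_append (a :: x) [b]).isInfix ?_,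
      hproper _ (suffix_cons a _).isInfix ?_, habsent⟩ <;>
      exact fun h => by simpa using congrArg length h
  · rintro ⟨hax, hxb, habsent⟩
    refine ⟨habsent, fun w hw hne => ?_⟩
    rcases infix_cons_append_singleton hw hne with h | h
    exacts [h.trans hax, h.trans hxb]

theorem exists_mem_endPos_of_infix (h : w <:+: y) : ∃ i, i ∈ EndPos y w := by
  obtain ⟨s, t, rfl⟩ := h
  refine ⟨(s ++ w).length, by simp, by simp, ?_⟩
  rw [take_left]
  exact suffix_append s w

theorem infix_of_mem_endPos {i : ℕ} (hi : i ∈ EndPos y w) : w <:+: y :=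
  hi.2.2.isInfix.trans (take_prefix i y).isInfix

theorem mem_endPos_of_suffix {i : ℕ} (h : u <:+ v) (hi : i ∈ EndPos y v) : i ∈ EndPos y u :=
  ⟨h.length_le.trans hi.1, hi.2.1, h.trans hi.2.2⟩

theorem add_one_mem_endPos_append_singleton {k : ℕ} :
    k + 1 ∈ EndPos y (u ++ [b]) ↔ k ∈ EndPos y u ∧ y[k]? = some b := by
  simp only [EndPos, Set.mem_ofPred_eq, length_append, length_singleton, add_le_add_iff_right,
    take_add_one]
  constructor
  · rintro ⟨hu, hk, hsuf⟩
    rw [getElem?_eq_getElem hk, Option.toList_some,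
      append_singleton_suffix_append_singleton] at hsuf
    exact ⟨⟨hu, Nat.le_of_succ_le hk, hsuf.1⟩, by rw [getElem?_eq_getElem hk, hsuf.2]⟩
  · rintro ⟨⟨hu, -, hsuf⟩, hb⟩
    have hk : k < y.length := (List.getElem?_eq_some_iff.mp hb).1
    rw [hb, Option.toList_some, append_singleton_suffix_append_singleton]
    exact ⟨hu, hk, hsuf, rfl⟩

-- Strings ending at a common position of `y` are suffix-comparable.
theorem suffix_of_endPos_eq (hu : u <:+: y) (hxu : x <:+ u)
    (hv : EndPos y v = EndPos y x) (hlen : u.length ≤ v.length) : u <:+ v := by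
  obtain ⟨i, hi⟩ := exists_mem_endPos_of_infix hu
  have hiv : i ∈ EndPos y v := hv ▸ mem_endPos_of_suffix hxu hi
  rcases suffix_or_suffix_of_suffix hi.2.2 hiv.2.2 with h | h
  · exact h
  · rw [h.eq_of_length_le hlen]

theorem isRrepOf_self_of_not_infix_cons_append (hax : (a :: x) <:+: y)
    (hxb : (x ++ [b]) <:+: y) (habsent : ¬ (a :: (x ++ [b])) <:+: y) :
    IsRrepOf y x x := by
  refine ⟨rfl, fun v hv => ?_⟩
  by_contra! hlen
  obtain ⟨_ | k, hk⟩ := exists_mem_endPos_of_infix hxb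
  · simpa using hk.1
  obtain ⟨hkx, hb⟩ := add_one_mem_endPos_append_singleton.mp hk
  have haxv : (a :: x) <:+ v := suffix_of_endPos_eq hax (suffix_cons a x) hv hlen
  have hkax : k ∈ EndPos y (a :: x) := mem_endPos_of_suffix haxv (hv ▸ hkx)
  exact habsent (infix_of_mem_endPos (add_one_mem_endPos_append_singleton.mpr ⟨hkax, hb⟩))

end Occurrences

theorem maw_iff_dawg_condition {α : Type*} (y : List α) (a b : α) (x : List α) :
    IsMAW y (a :: (x ++ [b])) ↔
      x <:+: y ∧ IsRrepOf y x x ∧ (x ++ [b]) <:+: y ∧ (a :: x) <:+: y ∧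
        ¬ (a :: (x ++ [b])) <:+: y := by
  rw [isMAW_cons_append_singleton_iff]
  constructor
  · rintro ⟨hax, hxb, habsent⟩
    exact ⟨(infix_cons (infix_refl x)).trans hax,
      isRrepOf_self_of_not_infix_cons_append hax hxb habsent, hxb, hax, habsent⟩
  · rintro ⟨-, -, hxb, hax, habsent⟩
    exact ⟨hax, hxb, habsent⟩
end

section
/- Let y be a string over an alphabet Σ and let u, v ∈ Substr(y) with EndPos_y(u) = EndPos_y(v). Then for every character b ∈ Σ, u·b ∈ Substr(y) if and only if v·b ∈ Substr(y), and in that case EndPos_y(u·b) = EndPos_y(v·b). (Hence the out-edges of the DAWG of y are well defined on right-equivalence classes.) -/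
open List

theorem mem_endpos_append {α : Type*} (y x : List α) (b : α) (i : ℕ) :
    i ∈ EndPos y (x ++ [b]) ↔
      (i - 1) ∈ EndPos y x ∧ 1 ≤ i ∧ i ≤ y.length ∧ [b] <:+ y.take i := by
  simp only [EndPos, Set.mem_setOf_eq, List.length_append, List.length_singleton]
  constructor
  · rintro ⟨hl, hn, s, hs⟩
    have h1 : 1 ≤ i := le_trans (Nat.le_add_left 1 x.length) hl
    have hlen : (y.take i).length = i := by
      rw [List.length_take]; exact min_eq_left hn
    have hsx : (s ++ x).length = i - 1 := by
      have h2 := congrArg List.length hs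
      rw [hlen] at h2
      simp only [List.length_append, List.length_singleton] at h2 ⊢
      omega
    have htk : y.take (i - 1) = s ++ x := by
      have h3 : (y.take i).take (i - 1) = y.take (i - 1) := by
        rw [List.take_take]; congr 1; omega
      rw [← h3, ← hs, ← List.append_assoc, List.take_left' hsx]
    refine ⟨⟨by omega, by omega, s, htk.symm⟩, h1, hn, ?_⟩
    exact ⟨s ++ x, by rw [← hs]; simp⟩
  · rintro ⟨⟨hl', hn', s, hs'⟩, h1, hn, t, ht⟩
    have hlen : (y.take i).length = i := by
      rw [List.length_take]; exact min_eq_left hn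
    have hst : t.length = i - 1 := by
      have h2 := congrArg List.length ht
      rw [hlen] at h2
      simp only [List.length_append, List.length_singleton] at h2
      omega
    have htpre : t <+: y := by
      refine List.IsPrefix.trans ⟨[b], ht⟩ (List.take_prefix i y)
    have ht2 : t = y.take (i - 1) := by
      have := List.prefix_iff_eq_take.mp htpre
      rw [this, hst]
    refine ⟨by omega, hn, s, ?_⟩
    rw [← ht, ht2, ← hs']; simp

theorem infix_iff_exists_endpos {α : Type*} (y x : List α) :
    x <:+: y ↔ ∃ i, i ∈ EndPos y x := by
  constructor
  · rintro ⟨s, t, ht⟩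
    refine ⟨s.length + x.length, ?_, ?_, s, ?_⟩
    · omega
    · rw [← ht]; simp [List.length_append]
    · rw [← ht, show s ++ x ++ t = (s ++ x) ++ t by simp,
        List.take_left' (by simp)]
  · rintro ⟨i, _, _, hs⟩
    exact List.IsInfix.trans hs.isInfix (List.take_prefix i y).isInfix

theorem dawg_edges_well_defined {α : Type*} (y u v : List α)
    (hu : u <:+: y) (hv : v <:+: y) (h : EndPos y u = EndPos y v) :
    ∀ b : α, ((u ++ [b]) <:+: y ↔ (v ++ [b]) <:+: y) ∧
      ((u ++ [b]) <:+: y → EndPos y (u ++ [b]) = EndPos y (v ++ [b])) := by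
  intro b
  have key : EndPos y (u ++ [b]) = EndPos y (v ++ [b]) := by
    ext i
    rw [mem_endpos_append, mem_endpos_append, h]
  refine ⟨?_, fun _ => key⟩
  rw [infix_iff_exists_endpos, infix_iff_exists_endpos, key]
end
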